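/- arXiv:1705.08626 — 2 statements merged into one kernel-verified Lean document; each statement's English description precedes it below -/
import Mathlib

section
/- If the normalized Dedekind sum S(a,b) = 12·s(a,b) is an integer, then S(a,b) = 0. -/
open Classical in
noncomputable def saw (x : ℝ) : ℝ :=
  if ∃ n : ℤ, x = (n : ℝ) then 0 else x - ⌊x⌋ - 1/2

noncomputable def dedekindSum (a : ℤ) (b : ℕ) : ℝ :=
  ∑ k ∈ Finset.Icc 1 b, saw ((k : ℝ) / b) * saw ((a : ℝ) * k / b)

noncomputable def normDedekindSum (a : ℤ) (b : ℕ) : ℝ := 12 * dedekindSum a b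

/-! ### Basic properties of `saw` -/

lemma saw_intCast (n : ℤ) : saw (n : ℝ) = 0 := by
  rw [saw, if_pos ⟨n, rfl⟩]

lemma saw_not_int {x : ℝ} (hx : ¬∃ n : ℤ, x = (n : ℝ)) :
    saw x = x - ⌊x⌋ - 1/2 := by
  rw [saw, if_neg hx]

lemma saw_add_int (x : ℝ) (n : ℤ) : saw (x + n) = saw x := by
  by_cases h : ∃ m : ℤ, x = (m : ℝ)
  · obtain ⟨m, rfl⟩ := h
    rw [saw_intCast, show ((m : ℝ) + n) = ((m + n : ℤ) : ℝ) by push_cast; ring,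
      saw_intCast]
  · have h2 : ¬∃ m : ℤ, x + n = (m : ℝ) := by
      rintro ⟨m, hm⟩
      exact h ⟨m - n, by push_cast; linarith⟩
    rw [saw_not_int h, saw_not_int h2, Int.floor_add_intCast]
    push_cast
    ring

lemma saw_of_mem {x : ℝ} (h0 : 0 < x) (h1 : x < 1) : saw x = x - 1/2 := by
  have hx : ¬∃ n : ℤ, x = (n : ℝ) := by
    rintro ⟨n, rfl⟩
    have h2 : 0 < n := by exact_mod_cast h0
    have h3 : n < 1 := by exact_mod_cast h1
    omega
  rw [saw_not_int hx, Int.floor_eq_zero_iff.2 ⟨le_of_lt h0, h1⟩]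
  norm_num

/-! ### The discrete version of the Dedekind sum -/

def Tsum (a : ℤ) (b : ℕ) : ℤ :=
  ∑ k ∈ Finset.range b, (2 * (k : ℤ) - b) * (2 * ((a * k) % b) - b)

lemma emod_inv_key (b : ℕ) (u v : ℤ) (huv : (u * v) % b = 1 % b)
    {k : ℕ} (hk : k < b) : (v * ((u * k) % b)) % b = (k : ℤ) := by
  have hk' : (k : ℤ) < b := by exact_mod_cast hk
  calc (v * ((u * k) % b)) % b = (v * (u * k)) % b := by
        rw [Int.mul_emod, Int.emod_emod_of_dvd _ (dvd_refl _), ← Int.mul_emod]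
    _ = ((u * v) % b * ((k : ℤ) % b)) % b := by rw [← Int.mul_emod]; ring_nf
    _ = (1 % b * ((k : ℤ) % b)) % b := by rw [huv]
    _ = (k : ℤ) := by
        rw [← Int.mul_emod, one_mul, Int.emod_eq_of_lt (by positivity) hk']

lemma perm_aux (b : ℕ) (hb : 0 < b) (a c : ℤ) (hac : (a * c) % b = 1 % b)
    (f : ℤ → ℤ) :
    ∑ k ∈ Finset.range b, f ((a * k) % b) = ∑ k ∈ Finset.range b, f (k : ℤ) := by
  have hbz : (0 : ℤ) < b := by exact_mod_cast hb
  have hca : (c * a) % b = 1 % b := by rwa [mul_comm] at hac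
  have hmem : ∀ (u : ℤ) (k : ℕ), k ∈ Finset.range b →
      ((u * k) % b).toNat ∈ Finset.range b := by
    intro u k _
    have h0 : 0 ≤ (u * k) % b := Int.emod_nonneg _ (by omega)
    have h1 : (u * k) % b < b := Int.emod_lt_of_pos _ hbz
    exact Finset.mem_range.2 (by omega)
  have hinv : ∀ u v : ℤ, (u * v) % b = 1 % b → ∀ k : ℕ, k ∈ Finset.range b →
      ((v * (((u * k) % b).toNat : ℤ)) % b).toNat = k := by
    intro u v huv k hk
    rw [Int.toNat_of_nonneg (Int.emod_nonneg _ (by omega : (b:ℤ) ≠ 0)),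
      emod_inv_key b u v huv (Finset.mem_range.1 hk)]
    exact Int.toNat_natCast k
  refine Finset.sum_bij' (fun k _ => ((a * k) % b).toNat)
    (fun k _ => ((c * k) % b).toNat) (hmem a) (hmem c)
    (hinv a c hac) (hinv c a hca) ?_
  intro k hk
  congr 1
  rw [Int.toNat_of_nonneg (Int.emod_nonneg _ (by omega : (b:ℤ) ≠ 0))]

lemma rk_ne_zero (a : ℤ) (b : ℕ) (h : Int.gcd a b = 1) {k : ℕ}
    (hk1 : 1 ≤ k) (hk2 : k < b) : (a * k) % (b : ℤ) ≠ 0 := by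
  intro h0
  have hdvd : (b : ℤ) ∣ a * k := Int.dvd_of_emod_eq_zero h0
  have hcop : IsCoprime (b : ℤ) a := by
    rw [Int.isCoprime_iff_gcd_eq_one, Int.gcd_comm]
    exact h
  have h1 : (b : ℤ) ∣ (k : ℤ) := hcop.dvd_of_dvd_mul_left hdvd
  have h2 : b ∣ k := by exact_mod_cast h1
  have := Nat.eq_zero_of_dvd_of_lt h2 hk2
  omega

lemma term_eq (a : ℤ) (b : ℕ) (h : Int.gcd a b = 1) (k : ℕ)
    (hk1 : 1 ≤ k) (hk2 : k < b) :
    saw ((k : ℝ) / b) * saw ((a : ℝ) * k / b)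
      = (((2 * (k : ℤ) - b) * (2 * ((a * k) % b) - b) : ℤ) : ℝ) / (4 * (b : ℝ)^2) := by
  have hb : 0 < b := lt_of_le_of_lt (Nat.zero_le _) hk2
  have hbR : (0 : ℝ) < b := by exact_mod_cast hb
  have h1 : saw ((k : ℝ) / b) = (k : ℝ) / b - 1/2 := by
    apply saw_of_mem
    · positivity
    · rw [div_lt_one hbR]; exact_mod_cast hk2
  set r : ℤ := (a * k) % b with hr
  set q : ℤ := (a * k) / b with hq
  have hrq : (a : ℤ) * k = b * q + r := (Int.mul_ediv_add_emod (a * k) b).symm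
  have hr0 : 0 < r := by
    have := Int.emod_nonneg (a * (k:ℤ)) (by exact_mod_cast hb.ne' : (b:ℤ) ≠ 0)
    have hne := rk_ne_zero a b h hk1 hk2
    omega
  have hrb : r < b := Int.emod_lt_of_pos _ (by exact_mod_cast hb)
  have h2 : (a : ℝ) * k / b = (r : ℝ) / b + q := by
    have hcast : ((a * k : ℤ) : ℝ) = (b : ℝ) * q + r := by
      exact_mod_cast congrArg (Int.cast : ℤ → ℝ) hrq
    push_cast at hcast ⊢
    field_simp
    linarith
  have h3 : saw ((a : ℝ) * k / b) = (r : ℝ) / b - 1/2 := by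
    rw [h2, saw_add_int]
    apply saw_of_mem
    · have : (0:ℝ) < r := by exact_mod_cast hr0
      positivity
    · rw [div_lt_one hbR]; exact_mod_cast hrb
  rw [h1, h3]
  push_cast
  field_simp
  ring

lemma range_split (b : ℕ) (hb : 0 < b) {M : Type*} [AddCommMonoid M] (f : ℕ → M) :
    ∑ k ∈ Finset.range b, f k = f 0 + ∑ k ∈ Finset.Icc 1 (b-1), f k := by
  have hins : Finset.range b = insert 0 (Finset.Icc 1 (b-1)) := by
    ext x
    simp only [Finset.mem_range, Finset.mem_insert, Finset.mem_Icc]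
    omega
  rw [hins, Finset.sum_insert (by simp)]

lemma icc_split (b : ℕ) (hb : 0 < b) {M : Type*} [AddCommMonoid M] (f : ℕ → M) :
    ∑ k ∈ Finset.Icc 1 b, f k = f b + ∑ k ∈ Finset.Icc 1 (b-1), f k := by
  have hins : Finset.Icc 1 b = insert b (Finset.Icc 1 (b-1)) := by
    ext x
    simp only [Finset.mem_insert, Finset.mem_Icc]
    omega
  rw [hins, Finset.sum_insert (by simp only [Finset.mem_Icc]; omega)]

lemma norm_eq (a : ℤ) (b : ℕ) (hb : 0 < b) (h : Int.gcd a b = 1) :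
    normDedekindSum a b * (b : ℝ)^2 = 3 * ((Tsum a b : ℤ) : ℝ) - 3 * (b : ℝ)^2 := by
  have hbR : (0 : ℝ) < b := by exact_mod_cast hb
  have hbne : ((b : ℕ) : ℝ) ≠ 0 := ne_of_gt hbR
  have hsplit : dedekindSum a b
      = ∑ k ∈ Finset.Icc 1 (b - 1), saw ((k : ℝ) / b) * saw ((a : ℝ) * k / b) := by
    rw [dedekindSum, icc_split b hb]
    rw [div_self hbne, show (1:ℝ) = ((1:ℤ):ℝ) by norm_num, saw_intCast, zero_mul,
      zero_add]
  have hT : Tsum a b = (b:ℤ)^2 + ∑ k ∈ Finset.Icc 1 (b - 1),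
      (2 * (k : ℤ) - b) * (2 * ((a * k) % b) - b) := by
    rw [Tsum, range_split b hb]
    norm_num [Int.zero_emod]
    ring
  have hmain : ∑ k ∈ Finset.Icc 1 (b - 1), saw ((k : ℝ) / b) * saw ((a : ℝ) * k / b)
      = (∑ k ∈ Finset.Icc 1 (b - 1),
          (((2 * (k : ℤ) - b) * (2 * ((a * k) % b) - b) : ℤ) : ℝ)) / (4 * (b : ℝ)^2) := by
    rw [Finset.sum_div]
    refine Finset.sum_congr rfl fun k hk => ?_
    obtain ⟨hk1, hk2⟩ := Finset.mem_Icc.1 hk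
    exact term_eq a b h k hk1 (by omega)
  rw [normDedekindSum, hsplit, hmain]
  have hcast : ((Tsum a b : ℤ) : ℝ) = (b:ℝ)^2 + ∑ k ∈ Finset.Icc 1 (b - 1),
      (((2 * (k : ℤ) - b) * (2 * ((a * k) % b) - b) : ℤ) : ℝ) := by
    rw [hT]
    push_cast
    ring
  rw [hcast]
  field_simp
  ring

/-! ### The key congruence -/

lemma gauss1 (n : ℕ) : 2 * ∑ k ∈ Finset.range n, (k : ℤ) = n * (n - 1) := by
  induction n with
  | zero => simp
  | succ m ih =>
    rw [Finset.sum_range_succ, mul_add, ih]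
    push_cast
    ring

lemma gauss2 (n : ℕ) : 6 * ∑ k ∈ Finset.range n, (k : ℤ)^2
    = n * (n - 1) * (2 * n - 1) := by
  induction n with
  | zero => simp
  | succ m ih =>
    rw [Finset.sum_range_succ, mul_add, ih]
    push_cast
    ring

lemma inv_emod (a : ℤ) (b : ℕ) (h : Int.gcd a b = 1) :
    ∃ c : ℤ, (a * c) % b = 1 % b := by
  obtain ⟨u, v, huv⟩ := Int.isCoprime_iff_gcd_eq_one.2 h
  refine ⟨u, ?_⟩
  have heq : a * u = 1 + (b : ℤ) * (-v) := by linarith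
  rw [heq, Int.add_mul_emod_self_left]

lemma keyE (a : ℤ) (b : ℕ) (hb : 0 < b) (h : Int.gcd a b = 1) :
    ∃ C : ℤ, 3 * a * Tsum a b
      = (a^2 + 1) * b * ((b:ℤ) - 1) * (2 * (b:ℤ) - 1) + (b:ℤ)^2 * C := by
  obtain ⟨c, hc⟩ := inv_emod a b h
  have hrq : ∀ k : ℕ, (a * k) % (b:ℤ) = a * k - b * ((a * k) / b) :=
    fun k => Int.emod_def _ _
  have e1 : Tsum a b = 4 * (∑ k ∈ Finset.range b, (k:ℤ) * ((a * k) % b))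
      - 2 * b * (∑ k ∈ Finset.range b, (a * k) % (b:ℤ))
      - 2 * b * (∑ k ∈ Finset.range b, (k:ℤ)) + (b:ℤ)^3 := by
    have hconst : (∑ _k ∈ Finset.range b, (b:ℤ)^2) = (b:ℤ)^3 := by
      rw [Finset.sum_const, Finset.card_range, nsmul_eq_mul]
      ring
    rw [Tsum, Finset.mul_sum, Finset.mul_sum, Finset.mul_sum, ← hconst,
      ← Finset.sum_sub_distrib, ← Finset.sum_sub_distrib, ← Finset.sum_add_distrib]
    exact Finset.sum_congr rfl fun k _ => by ring
  have e2 : (∑ k ∈ Finset.range b, (k:ℤ) * ((a * k) % b))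
      = a * (∑ k ∈ Finset.range b, (k:ℤ)^2)
        - b * (∑ k ∈ Finset.range b, (k:ℤ) * ((a * k) / b)) := by
    rw [Finset.mul_sum, Finset.mul_sum, ← Finset.sum_sub_distrib]
    exact Finset.sum_congr rfl fun k _ => by rw [hrq k]; ring
  have e3 : (∑ k ∈ Finset.range b, (a * k) % (b:ℤ))
      = a * (∑ k ∈ Finset.range b, (k:ℤ))
        - b * (∑ k ∈ Finset.range b, (a * k) / (b:ℤ)) := by
    rw [Finset.mul_sum, Finset.mul_sum, ← Finset.sum_sub_distrib]
    exact Finset.sum_congr rfl fun k _ => by rw [hrq k]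
  have e4 : (∑ k ∈ Finset.range b, ((a * k) % (b:ℤ))^2)
      = a^2 * (∑ k ∈ Finset.range b, (k:ℤ)^2)
        - 2 * a * b * (∑ k ∈ Finset.range b, (k:ℤ) * ((a * k) / b))
        + (b:ℤ)^2 * (∑ k ∈ Finset.range b, ((a * k) / (b:ℤ))^2) := by
    rw [Finset.mul_sum, Finset.mul_sum, Finset.mul_sum, ← Finset.sum_sub_distrib,
      ← Finset.sum_add_distrib]
    exact Finset.sum_congr rfl fun k _ => by rw [hrq k]; ring
  have e5 : (∑ k ∈ Finset.range b, ((a * k) % (b:ℤ))^2)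
      = ∑ k ∈ Finset.range b, (k:ℤ)^2 :=
    perm_aux b hb a c hc (fun m => m^2)
  refine ⟨6 * a * (∑ k ∈ Finset.range b, (a * k) / (b:ℤ))
      - 6 * (∑ k ∈ Finset.range b, ((a * k) / (b:ℤ))^2)
      - 3 * a * (a + 1) * ((b:ℤ) - 1) + 3 * a * b, ?_⟩
  linear_combination (3*a) * e1 + (12*a) * e2 + (-(6*a*(b:ℤ))) * e3 + (-6) * e4
    + 6 * e5 + (-(3*a*(b:ℤ)*(1+a))) * gauss1 b + (a^2+1) * gauss2 b

/-! ### `Tsum` vanishes when `a^2 ≡ -1 mod b` -/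

lemma tsum_eq_sq (a : ℤ) (b : ℕ) (hb : 0 < b) (h : Int.gcd a b = 1)
    (hfin : (b:ℤ) ∣ a^2 + 1) : Tsum a b = (b:ℤ)^2 := by
  have hbz : (0:ℤ) < b := by exact_mod_cast hb
  obtain ⟨w, hw⟩ := hfin
  have hac : (a * (-a)) % (b:ℤ) = 1 % b := by
    have heq : a * (-a) = 1 + (b:ℤ) * (-w) := by linarith
    rw [heq, Int.add_mul_emod_self_left]
  have hca : ((-a) * a) % (b:ℤ) = 1 % b := by rwa [mul_comm] at hac
  have hperm2 := perm_aux b hb (-a) a hca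
    (fun m => (2 * m - (b:ℤ)) * (2 * ((a * m) % b) - b))
  -- rewrite each term on the LHS
  have hsum2 : Tsum a b
      = ∑ k ∈ Finset.range b, (2 * ((-a * k) % (b:ℤ)) - b) * (2 * (k:ℤ) - b) := by
    have hR : (∑ k ∈ Finset.range b,
        (2 * ((k:ℤ)) - (b:ℤ)) * (2 * ((a * k) % b) - b)) = Tsum a b := rfl
    rw [← hR, ← hperm2]
    refine Finset.sum_congr rfl fun k hk => ?_
    rw [emod_inv_key b (-a) a hca (Finset.mem_range.1 hk)]
  have hpair : ∀ k ∈ Finset.range b,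
      (2 * (k:ℤ) - b) * (2 * ((a * k) % b) - b)
        + (2 * ((-a * k) % (b:ℤ)) - b) * (2 * (k:ℤ) - b)
      = if k = 0 then 2 * (b:ℤ)^2 else 0 := by
    intro k hk
    rcases eq_or_ne k 0 with rfl | hk0
    · simp only [if_pos]
      norm_num [Int.zero_emod]
      ring
    · rw [if_neg hk0]
      have hr0 : (a * k) % (b:ℤ) ≠ 0 :=
        rk_ne_zero a b h (by omega) (Finset.mem_range.1 hk)
      have hrpos : 0 < (a * k) % (b:ℤ) := by
        have := Int.emod_nonneg (a * (k:ℤ)) (by omega : (b:ℤ) ≠ 0)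
        omega
      have hrlt : (a * k) % (b:ℤ) < b := Int.emod_lt_of_pos _ hbz
      have hsnn : 0 ≤ (-a * k) % (b:ℤ) := Int.emod_nonneg _ (by omega)
      have hslt : (-a * k) % (b:ℤ) < b := Int.emod_lt_of_pos _ hbz
      have hdvd : (b:ℤ) ∣ ((a * k) % (b:ℤ) + (-a * k) % (b:ℤ)) :=
        ⟨-((a * k) / b + (-a * k) / b), by
          rw [Int.emod_def, Int.emod_def]; ring⟩
      obtain ⟨t, ht⟩ := hdvd
      have hteq : (b:ℤ) * t = b := by
        rcases lt_trichotomy t 1 with h1 | h1 | h1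
        · exfalso
          have ht0 : t ≤ 0 := by omega
          have : (b:ℤ) * (-t) ≥ 0 := mul_nonneg hbz.le (by omega)
          nlinarith
        · rw [h1, mul_one]
        · exfalso
          have : (b:ℤ) * (t - 2) ≥ 0 := mul_nonneg hbz.le (by omega)
          nlinarith
      have hs : (-a * k) % (b:ℤ) = b - (a * k) % (b:ℤ) := by omega
      rw [hs]
      ring
  have h2T : 2 * Tsum a b = 2 * (b:ℤ)^2 := by
    have : 2 * Tsum a b = ∑ k ∈ Finset.range b,
        ((2 * (k:ℤ) - b) * (2 * ((a * k) % b) - b)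
          + (2 * ((-a * k) % (b:ℤ)) - b) * (2 * (k:ℤ) - b)) := by
      rw [Finset.sum_add_distrib]
      have hR : (∑ k ∈ Finset.range b,
          (2 * ((k:ℤ)) - (b:ℤ)) * (2 * ((a * k) % b) - b)) = Tsum a b := rfl
      rw [hR, ← hsum2]
      ring
    rw [this, Finset.sum_congr rfl hpair, Finset.sum_ite_eq' (Finset.range b) 0
      (fun _ => 2 * (b:ℤ)^2), if_pos (Finset.mem_range.2 hb)]
  omega

/-! ### Main theorem -/

theorem normDedekindSum_int_eq_zero (a : ℤ) (b : ℕ) (h : Int.gcd a b = 1)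
    (hz : ∃ z : ℤ, normDedekindSum a b = (z : ℝ)) : normDedekindSum a b = 0 := by
  rcases Nat.eq_zero_or_pos b with rfl | hb
  · simp [normDedekindSum, dedekindSum]
  obtain ⟨z, hzz⟩ := hz
  have hnorm := norm_eq a b hb h
  have hbz : (0:ℤ) < b := by exact_mod_cast hb
  rw [hzz] at hnorm
  have hTz : (z : ℤ) * (b:ℤ)^2 = 3 * Tsum a b - 3 * (b:ℤ)^2 := by
    exact_mod_cast hnorm
  obtain ⟨C, hC⟩ := keyE a b hb h
  have hdvd1 : (b:ℤ)^2 ∣ (a^2 + 1) * b * ((b:ℤ) - 1) * (2 * (b:ℤ) - 1) :=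
    ⟨a * (z + 3) - C, by linear_combination (-a) * hTz - hC⟩
  obtain ⟨w, hw⟩ := hdvd1
  have hb2 : (b:ℤ) ∣ (a^2 + 1) * (((b:ℤ) - 1) * (2 * (b:ℤ) - 1)) := by
    refine ⟨w, mul_left_cancel₀ (by omega : (b:ℤ) ≠ 0) ?_⟩
    linear_combination hw
  have hfin : (b:ℤ) ∣ a^2 + 1 := by
    have h2 : (b:ℤ) ∣ (a^2 + 1) * (((b:ℤ) - 1) * (2 * (b:ℤ) - 1))
        - (b:ℤ) * ((a^2 + 1) * (2 * (b:ℤ) - 3)) := hb2.sub (Dvd.intro _ rfl)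
    have h3 : (a^2 + 1) * (((b:ℤ) - 1) * (2 * (b:ℤ) - 1))
        - (b:ℤ) * ((a^2 + 1) * (2 * (b:ℤ) - 3)) = a^2 + 1 := by ring
    rwa [h3] at h2
  have hTb := tsum_eq_sq a b hb h hfin
  have hnorm2 := norm_eq a b hb h
  rw [hTb] at hnorm2
  have hbR : (0:ℝ) < b := by exact_mod_cast hb
  have hzero : normDedekindSum a b * (b:ℝ)^2 = 0 := by
    rw [hnorm2]
    push_cast
    ring
  rcases mul_eq_zero.1 hzero with h0 | h0
  · exact h0
  · exfalso
    have : (b:ℝ)^2 ≠ 0 := by positivity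
    exact this h0
end

section
/- Let r ∈ ℚ be a value attained by a normalized Dedekind sum, i.e., there exist a ∈ ℤ, b ∈ ℕ with gcd(a,b)=1 and S(a,b) = r. Then there exists a sequence of pairs (aᵢ, bᵢ) with gcd(aᵢ, bᵢ) = 1, bᵢ → ∞ as i → ∞, and S(aᵢ, bᵢ) = r for all i ∈ ℕ. -/
/-!
For `c = b m` and `q = c² + 1` the pair `(a q + c, b q)` has the same normalized Dedekind sum as
`(a, b)`; letting `m → ∞` gives the sequence. For the identity,
`n² S(x, n) = 12 T(x, n) - 3 n² (n - 1)` with the integer moment `T(x, n) = ∑_{k<n} k (x k mod n)`.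
Modulo `b q`, the residue of `(a q + c) k` is `q (a k mod b) + b (m k mod q)`, minus `b q` when that
sum is at least `b q` (a carry). The first two terms give periodic sums. For the carries write
`k = q s + j`: since `q ≡ 1 (mod b)`, a carry occurs iff
`b - (a (j + s) mod b) ≤ ⌊b (m j mod q) / q⌋`, and on the block `j = 1 + c f + i` (`i < c`) the
right side is `f mod b`, because `⌊c j / q⌋ = f` there.
-/

open Finset Function

namespace DedekindSum

theorem sum_range_mul_eq_sum_sum {M : Type*} [AddCommMonoid M] (f : ℕ → M) (n l : ℕ) :
    ∑ k ∈ range (n * l), f k = ∑ t ∈ range l, ∑ i ∈ range n, f (n * t + i) := by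
  induction l with
  | zero => simp
  | succ l ih => rw [Nat.mul_succ, sum_range_add, ih, sum_range_succ]

theorem sum_range_mul_self_add_one {M : Type*} [AddCommMonoid M] (g : ℕ → M) (c : ℕ) :
    ∑ j ∈ range (c * c + 1), g j = g 0 + ∑ f ∈ range c, ∑ i ∈ range c, g (1 + c * f + i) := by
  rw [sum_range_succ', sum_range_mul_eq_sum_sum, add_comm]
  simp only [add_comm _ 1, add_assoc]

theorem two_mul_sum_range_id (n : ℕ) : 2 * ∑ k ∈ range n, (k : ℤ) = n * (n - 1) := by
  induction n with
  | zero => simp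
  | succ n ih => rw [sum_range_succ, mul_add, ih]; push_cast; ring

theorem six_mul_sum_range_sq (n : ℕ) :
    6 * ∑ k ∈ range n, (k : ℤ) ^ 2 = n * (n - 1) * (2 * n - 1) := by
  induction n with
  | zero => simp
  | succ n ih => rw [sum_range_succ, mul_add, ih]; push_cast; ring

theorem _root_.Function.Periodic.sum_range_mul {M : Type*} [AddCommMonoid M] {f : ℕ → M}
    {n : ℕ} (hf : Periodic f n) (l : ℕ) :
    ∑ k ∈ range (n * l), f k = l • ∑ i ∈ range n, f i := by
  have hshift (t i : ℕ) : f (n * t + i) = f i := by rw [add_comm, mul_comm]; exact hf.nat_mul t i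
  simp [sum_range_mul_eq_sum_sum, hshift]

theorem _root_.Function.Periodic.sum_range_mul_natCast_mul {R : Type*} [CommSemiring R]
    {f : ℕ → R} {n : ℕ} (hf : Periodic f n) (l : ℕ) :
    ∑ k ∈ range (n * l), (k : R) * f k
      = n * (∑ t ∈ range l, (t : R)) * ∑ i ∈ range n, f i
        + l * ∑ i ∈ range n, (i : R) * f i := by
  have hshift (t i : ℕ) : f (n * t + i) = f i := by rw [add_comm, mul_comm]; exact hf.nat_mul t i
  simp only [sum_range_mul_eq_sum_sum, hshift, Nat.cast_add, Nat.cast_mul, add_mul,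
    sum_add_distrib, ← mul_sum, ← sum_mul, sum_const, card_range, nsmul_eq_mul]

theorem sum_range_natCast_emod (b l : ℕ) :
    ∑ f ∈ range (b * l), (f : ℤ) % b = l * ∑ v ∈ range b, (v : ℤ) := by
  have hper : Periodic (fun f : ℕ ↦ (f : ℤ) % b) b := fun f ↦ by simp
  rw [hper.sum_range_mul, nsmul_eq_mul]
  congr 1
  exact sum_congr rfl fun v hv ↦
    Int.emod_eq_of_lt (by positivity) (by exact_mod_cast mem_range.1 hv)

theorem sum_range_comp_mul_add_emod {M : Type*} [AddCommMonoid M] {a : ℤ} {b : ℕ}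
    (h : IsCoprime a b) (w : ℤ) (g : ℤ → M) :
    ∑ s ∈ range b, g (a * (w + s) % b) = ∑ v ∈ range b, g v := by
  rcases Nat.eq_zero_or_pos b with rfl | hb
  · simp
  have hb' : (0 : ℤ) < b := by exact_mod_cast hb
  let e : ℕ → ℕ := fun s ↦ (a * (w + s) % b).toNat
  have he (s : ℕ) : (e s : ℤ) = a * (w + s) % b := Int.toNat_of_nonneg (Int.emod_nonneg _ hb'.ne')
  have hmaps : Set.MapsTo e (range b) (range b) := fun s _ ↦ by
    simpa [← Nat.cast_lt (α := ℤ), he] using Int.emod_lt_of_pos _ hb'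
  have hinj : Set.InjOn e (range b) := by
    intro s hs s' hs' hss'
    have hmod : a * (w + s) ≡ a * (w + s') [ZMOD b] := by
      rw [Int.ModEq, ← he, ← he, hss']
    have hdvd : (b : ℤ) ∣ (s' - s) * a := by
      convert hmod.dvd using 1; ring
    exact (Nat.modEq_iff_dvd.2 (h.symm.dvd_of_dvd_mul_right hdvd)).eq_of_lt_of_lt
      (mem_range.1 hs) (mem_range.1 hs')
  exact sum_nbij e hmaps hinj (surjOn_of_injOn_of_card_le e hmaps hinj le_rfl) fun s _ ↦ by rw [he]

theorem sum_range_boole_sub_le {b : ℕ} {H : ℤ} (h0 : 0 ≤ H) (hH : H ≤ b) :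
    ∑ v ∈ range b, (if (b : ℤ) - v ≤ H then (1 : ℤ) else 0) = H := by
  lift H to ℕ using h0
  obtain ⟨d, rfl⟩ : ∃ d, b = d + H := ⟨b - H, by omega⟩
  rw [sum_range_add, sum_eq_zero fun v hv ↦ if_neg (by rw [mem_range] at hv; omega),
    sum_congr rfl fun i _ ↦ if_pos (by push_cast; omega)]
  simp

theorem sum_range_mul_boole_sub_emod_le {a : ℤ} {b : ℕ} (h : IsCoprime a b) (w : ℤ) {H : ℤ}
    (h0 : 0 ≤ H) (hH : H ≤ b) (l : ℕ) :
    ∑ i ∈ range (b * l), (if (b : ℤ) - a * (w + i) % b ≤ H then (1 : ℤ) else 0) = l * H := by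
  have hper : Periodic (fun i : ℕ ↦ if (b : ℤ) - a * (w + i) % b ≤ H then (1 : ℤ) else 0) b :=
    fun i ↦ by
      simp only [Nat.cast_add, ← add_assoc, mul_add _ _ (b : ℤ), Int.add_mul_emod_self_right]
  rw [hper.sum_range_mul,
    sum_range_comp_mul_add_emod h w (fun x ↦ if (b : ℤ) - x ≤ H then 1 else 0),
    sum_range_boole_sub_le h0 hH, nsmul_eq_mul]

theorem sum_range_emod_mul {a : ℤ} {b : ℕ} (h : IsCoprime a b) :
    ∑ k ∈ range b, a * k % b = ∑ v ∈ range b, (v : ℤ) := by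
  simpa using sum_range_comp_mul_add_emod h 0 id

def residueMoment (x : ℤ) (n : ℕ) : ℤ := ∑ k ∈ range n, k * (x * k % n)

theorem saw_intCast (z : ℤ) : saw z = 0 := if_pos ⟨z, rfl⟩

theorem saw_intCast_div {x : ℤ} {n : ℕ} (hn : 0 < n) (hx : ¬ (n : ℤ) ∣ x) :
    saw (x / n) = (x % n : ℤ) / n - 1 / 2 := by
  have hn' : (n : ℝ) ≠ 0 := by positivity
  have hnot : ¬ ∃ z : ℤ, (x / n : ℝ) = z := by
    rintro ⟨z, hz⟩
    exact hx ⟨z, by rw [div_eq_iff hn'] at hz; exact_mod_cast hz.trans (mul_comm _ _)⟩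
  rw [saw, if_neg hnot, Int.self_sub_floor, Int.fract_div_intCast_eq_div_intCast_mod]

theorem sum_Ico_mul_sub_mul_sub_emod {x : ℤ} {n : ℕ} (hn : 0 < n) (h : IsCoprime x n) :
    ∑ k ∈ Ico 1 n, (2 * k - n) * (2 * (x * k % n) - n)
      = 4 * residueMoment x n - n ^ 2 * (n - 1) := by
  have hrange := sum_eq_sum_Ico_succ_bot hn fun k : ℕ ↦ (2 * (k : ℤ) - n) * (2 * (x * k % n) - n)
  have hexpand : ∑ k ∈ range n, (2 * (k : ℤ) - n) * (2 * (x * k % n) - n)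
      = 4 * residueMoment x n - n * (2 * ∑ k ∈ range n, (k : ℤ))
        - n * (2 * ∑ k ∈ range n, x * k % n) + n ^ 3 := by
    rw [sum_congr rfl fun (k : ℕ) _ ↦ show (2 * (k : ℤ) - n) * (2 * (x * k % n) - n)
      = 4 * (k * (x * k % n)) - n * (2 * k) - n * (2 * (x * k % n)) + n ^ 2 by ring]
    simp only [sum_add_distrib, sum_sub_distrib, ← mul_sum, sum_const, card_range,
      nsmul_eq_mul, residueMoment]
    ring
  rw [← range_eq_Ico] at hrange
  rw [hexpand, sum_range_emod_mul h, two_mul_sum_range_id] at hrange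
  simp only [Nat.cast_zero, mul_zero, Int.zero_emod, zero_sub, zero_add] at hrange
  linear_combination -hrange

theorem sq_mul_normDedekindSum {x : ℤ} {n : ℕ} (hn : 0 < n) (h : IsCoprime x n) :
    (n : ℝ) ^ 2 * normDedekindSum x n = 12 * residueMoment x n - 3 * n ^ 2 * (n - 1) := by
  have hn' : (n : ℝ) ≠ 0 := by positivity
  have hterm (k : ℕ) (hk : k ∈ Ico 1 n) :
      (n : ℝ) ^ 2 * (12 * (saw (k / n) * saw (x * k / n)))
        = 3 * ((2 * k - n) * (2 * (x * k % n) - n) : ℤ) := by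
    obtain ⟨hk1, hkn⟩ := mem_Ico.1 hk
    have hk : ¬ (n : ℤ) ∣ k := fun hd ↦ by
      have := Nat.le_of_dvd (by omega) (Int.natCast_dvd_natCast.1 hd); omega
    have hxk : ¬ (n : ℤ) ∣ x * k := fun hd ↦ hk (h.symm.dvd_of_dvd_mul_left hd)
    have h1 := saw_intCast_div hn hk
    have h2 := saw_intCast_div hn hxk
    rw [Int.emod_eq_of_lt (by positivity) (by exact_mod_cast hkn)] at h1
    push_cast at h1 h2 ⊢
    rw [h1, h2]
    field_simp
    ring
  have hIcc : dedekindSum x n = ∑ k ∈ Ico 1 n, saw (k / n) * saw (x * k / n) := by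
    rw [dedekindSum, ← Ico_add_one_right_eq_Icc, sum_Ico_succ_top hn, div_self hn',
      ← Int.cast_one, saw_intCast, zero_mul, add_zero]
  rw [normDedekindSum, hIcc, mul_sum, mul_sum, sum_congr rfl hterm, ← mul_sum, ← Int.cast_sum,
    sum_Ico_mul_sub_mul_sub_emod hn h]
  push_cast
  ring

theorem normDedekindSum_zero_right (a : ℤ) : normDedekindSum a 0 = 0 := by
  simp [normDedekindSum, dedekindSum]

theorem mul_emod_ediv (b x : ℤ) {q : ℤ} (hq : q ≠ 0) :
    b * (x % q) / q = b * x / q - b * (x / q) := by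
  rw [show b * x = b * (x % q) + q * (b * (x / q)) by
    rw [mul_left_comm, ← mul_add, Int.emod_add_mul_ediv], Int.add_mul_ediv_left _ _ hq]
  ring

theorem mul_block_ediv {c f i : ℕ} (hf : f < c) (hi : i < c) :
    (c : ℤ) * (1 + c * f + i) / (c * c + 1) = f := by
  have hfc : (f : ℤ) < c := by exact_mod_cast hf
  have hic : (i : ℤ) < c := by exact_mod_cast hi
  refine ((Int.ediv_emod_unique (r := c + c * i - f) (by positivity)).2 ⟨?_, ?_, ?_⟩).1
  · ring
  · nlinarith
  · nlinarith

theorem mul_emod_block_ediv {b m c f i : ℕ} (hc : c = b * m) (hf : f < c) (hi : i < c) :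
    (b : ℤ) * (m * (1 + c * f + i) % (c * c + 1)) / (c * c + 1) = f % b := by
  have hq : (0 : ℤ) < c * c + 1 := by positivity
  have hbm : (b : ℤ) * (m * (1 + c * f + i)) = c * (1 + c * f + i) := by
    rw [hc]; push_cast; ring
  have hmj : (m : ℤ) * (1 + c * f + i) / (c * c + 1) = f / b := by
    rcases Nat.eq_zero_or_pos b with rfl | hb
    · omega
    rw [← Int.mul_ediv_mul_of_pos _ _ (by exact_mod_cast hb : (0 : ℤ) < b), hbm, mul_comm (b : ℤ),
      ← Int.ediv_ediv_of_nonneg hq.le, mul_block_ediv hf hi]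
  rw [mul_emod_ediv _ _ hq.ne', hbm, mul_block_ediv hf hi, hmj, Int.emod_def]

theorem add_mul_mul_emod_mul {b q : ℤ} (hb : 0 < b) (hq : 0 < q) (a m k : ℤ) :
    (a * q + b * m) * k % (b * q) = q * (a * k % b) + b * (m * k % q)
      - b * q * if b * q ≤ q * (a * k % b) + b * (m * k % q) then 1 else 0 := by
  set X := q * (a * k % b) + b * (m * k % q)
  have hr0 := Int.emod_nonneg (a * k) hb.ne'
  have hrb := Int.emod_lt_of_pos (a * k) hb
  have hu0 := Int.emod_nonneg (m * k) hq.ne'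
  have huq := Int.emod_lt_of_pos (m * k) hq
  have hX0 : 0 ≤ X := by positivity
  have hX2 : X < b * q + b * q := by nlinarith
  have hmod : (a * q + b * m) * k % (b * q) = X % (b * q) := by
    rw [show (a * q + b * m) * k = X + b * q * (a * k / b + m * k / q) by
      linear_combination
        (-q) * Int.emod_add_mul_ediv (a * k) b - b * Int.emod_add_mul_ediv (m * k) q,
      Int.add_mul_emod_self_left]
  rw [hmod]
  split_ifs with hle
  · conv_lhs => rw [show X = X - b * q * 1 + b * q * 1 by ring]
    rw [Int.add_mul_emod_self_left, Int.emod_eq_of_lt (by linarith) (by linarith)]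
  · rw [Int.emod_eq_of_lt hX0 (not_le.1 hle)]
    ring

theorem four_mul_sum_range_mul_mul_emod {a : ℤ} {b : ℕ} (h : IsCoprime a b) (l : ℕ) :
    4 * ∑ k ∈ range (b * l), (k : ℤ) * (a * k % b)
      = b ^ 2 * (b - 1) * l * (l - 1) + 4 * l * residueMoment a b := by
  have hper : Periodic (fun k : ℕ ↦ a * k % b) b := fun k ↦ by
    simp only [Nat.cast_add, mul_add, Int.add_mul_emod_self_right]
  rw [hper.sum_range_mul_natCast_mul, sum_range_emod_mul h, residueMoment]
  linear_combination 2 * b * (∑ v ∈ range b, (v : ℤ)) * two_mul_sum_range_id l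
    + b * (l : ℤ) * (l - 1) * two_mul_sum_range_id b

theorem six_mul_residueMoment (m : ℤ) (q : ℕ) :
    6 * residueMoment m q
      = m * q * (q - 1) * (2 * q - 1) - 6 * q * ∑ j ∈ range q, (j : ℤ) * (m * j / q) := by
  rw [residueMoment, sum_congr rfl fun (j : ℕ) _ ↦ show (j : ℤ) * (m * j % q)
    = m * j ^ 2 - q * (j * (m * j / q)) by rw [Int.emod_def]; ring, sum_sub_distrib, ← mul_sum,
    ← mul_sum]
  linear_combination m * six_mul_sum_range_sq q

theorem twelve_mul_sum_range_mul_ediv {c q : ℕ} (hq : q = c * c + 1) :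
    12 * ∑ j ∈ range q, (j : ℤ) * (c * j / q) = 4 * c ^ 5 - 3 * c ^ 4 + 2 * c ^ 3 - 3 * c ^ 2 := by
  subst hq
  push_cast
  have hblock (f : ℕ) (hf : f ∈ range c) :
      ∑ i ∈ range c, ((1 + c * f + i : ℕ) : ℤ) * (c * (1 + c * f + i : ℕ) / (c * c + 1))
        = c * (1 + c * f) * f + f * ∑ i ∈ range c, (i : ℤ) := by
    rw [sum_congr rfl fun i hi ↦ show
        ((1 + c * f + i : ℕ) : ℤ) * (c * (1 + c * f + i : ℕ) / (c * c + 1))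
          = (1 + c * f) * f + f * i by
      push_cast; rw [mul_block_ediv (mem_range.1 hf) (mem_range.1 hi)]; ring]
    rw [sum_add_distrib, sum_const, card_range, nsmul_eq_mul, mul_sum]
    ring
  rw [sum_range_mul_self_add_one, sum_congr rfl hblock]
  simp only [Nat.cast_zero, zero_mul, zero_add, sum_add_distrib, ← sum_mul,
    sum_congr rfl fun (f : ℕ) _ ↦ show (c : ℤ) * (1 + c * f) * f = c * f + c ^ 2 * f ^ 2 by ring,
    ← mul_sum]
  linear_combination (6 * (c : ℤ) + 3 * (2 * ∑ i ∈ range c, (i : ℤ) + c * (c - 1)))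
    * two_mul_sum_range_id c + 2 * (c : ℤ) ^ 2 * six_mul_sum_range_sq c

theorem two_mul_sum_range_boole_sub_emod_le {a : ℤ} {b m c q : ℕ} (hb : 0 < b) (h : IsCoprime a b)
    (hc : c = b * m) (hq : q = c * c + 1) (s : ℕ) :
    2 * ∑ j ∈ range q, (if (b : ℤ) - a * (j + s) % b ≤ b * (m * j % q) / q then (1 : ℤ) else 0)
      = m ^ 2 * b * (b - 1) := by
  have hb' : (0 : ℤ) < b := by exact_mod_cast hb
  have hzero : ¬ (b : ℤ) - a * ((0 : ℕ) + s) % b ≤ b * (m * (0 : ℕ) % q) / q := by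
    simpa using Int.emod_lt_of_pos (a * s) hb'
  have hblock (f : ℕ) (hf : f ∈ range c) :
      ∑ i ∈ range c, (if (b : ℤ) - a * ((1 + c * f + i : ℕ) + s) % b
          ≤ b * (m * (1 + c * f + i : ℕ) % q) / q then (1 : ℤ) else 0) = m * (f % b) := by
    have hH : (f : ℤ) % b ≤ b := (Int.emod_lt_of_pos _ hb').le
    rw [← sum_range_mul_boole_sub_emod_le h (1 + c * f + s) (Int.emod_nonneg _ hb'.ne') hH, ← hc]
    refine sum_congr rfl fun i hi ↦ ?_
    rw [hq]
    push_cast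
    rw [mul_emod_block_ediv hc (mem_range.1 hf) (mem_range.1 hi)]
    ring_nf
  rw [show range q = range (c * c + 1) by rw [hq], sum_range_mul_self_add_one, if_neg hzero,
    zero_add, sum_congr rfl hblock, ← mul_sum, hc, sum_range_natCast_emod]
  linear_combination (m : ℤ) ^ 2 * two_mul_sum_range_id b

theorem four_mul_sum_range_mul_boole {a : ℤ} {b m c q : ℕ} (hb : 0 < b) (h : IsCoprime a b)
    (hc : c = b * m) (hq : q = c * c + 1) :
    4 * ∑ k ∈ range (b * q), (k : ℤ) *
        (if (b : ℤ) * q ≤ q * (a * k % b) + b * (m * k % q) then 1 else 0)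
      = q * m ^ 2 * b ^ 2 * (b - 1) ^ 2 + 4 * ∑ j ∈ range q, (j : ℤ) * (b * (m * j % q) / q) := by
  have hb' : (0 : ℤ) < b := by exact_mod_cast hb
  have hq' : (0 : ℤ) < q := by rw [hq]; positivity
  set ε : ℕ → ℕ → ℤ := fun j s ↦
    if (b : ℤ) - a * (j + s) % b ≤ b * (m * j % q) / q then 1 else 0 with hε
  have hterm (s j : ℕ) : ((q * s + j : ℕ) : ℤ) * (if (b : ℤ) * q ≤
      q * (a * (q * s + j : ℕ) % b) + b * (m * (q * s + j : ℕ) % q) then 1 else 0)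
        = q * s * ε j s + j * ε j s := by
    have hr : a * (q * s + j : ℕ) % b = a * (j + s) % b := by
      rw [show a * (q * s + j : ℕ) = a * (j + s) + b * (a * s * b * m * m) by
        rw [hq, hc]; push_cast; ring, Int.add_mul_emod_self_left]
    have hu : (m : ℤ) * (q * s + j : ℕ) % q = m * j % q := by
      rw [show (m : ℤ) * (q * s + j : ℕ) = m * j + q * (m * s) by push_cast; ring,
        Int.add_mul_emod_self_left]
    have hiff : (b : ℤ) * q ≤ q * (a * (j + s) % b) + b * (m * j % q)
        ↔ (b : ℤ) - a * (j + s) % b ≤ b * (m * j % q) / q := by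
      rw [Int.le_ediv_iff_mul_le hq']
      constructor <;> intro <;> linarith
    rw [hr, hu, if_congr hiff rfl rfl]
    push_cast
    ring
  have hcount_s (j : ℕ) : ∑ s ∈ range b, ε j s = b * (m * j % q) / q := by
    have h0 : 0 ≤ (b : ℤ) * (m * j % q) / q :=
      Int.ediv_nonneg (mul_nonneg hb'.le (Int.emod_nonneg _ hq'.ne')) hq'.le
    have hle : (b : ℤ) * (m * j % q) / q ≤ b :=
      Int.ediv_le_of_le_mul hq' (mul_le_mul_of_nonneg_left (Int.emod_lt_of_pos _ hq').le hb'.le)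
    simpa only [hε, mul_one, Nat.cast_one, one_mul] using
      sum_range_mul_boole_sub_emod_le h j h0 hle 1
  have hcount_j (s : ℕ) : 2 * ∑ j ∈ range q, ε j s = m ^ 2 * b * (b - 1) :=
    two_mul_sum_range_boole_sub_emod_le hb h hc hq s
  rw [mul_comm b q, sum_range_mul_eq_sum_sum]
  simp only [hterm, sum_add_distrib, ← mul_sum]
  rw [sum_comm (f := fun (s j : ℕ) ↦ (j : ℤ) * ε j s)]
  simp only [← mul_sum, hcount_s]
  rw [mul_add, mul_sum, sum_congr rfl fun (s : ℕ) _ ↦ show 4 * ((q : ℤ) * s * ∑ j ∈ range q, ε j s)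
    = 2 * q * m ^ 2 * b * (b - 1) * s by linear_combination 2 * (q : ℤ) * s * hcount_j s, ← mul_sum]
  linear_combination (q : ℤ) * m ^ 2 * b * (b - 1) * two_mul_sum_range_id b

theorem twelve_mul_residueMoment_mul_add {a : ℤ} {b m c q : ℕ} (hb : 0 < b) (h : IsCoprime a b)
    (hc : c = b * m) (hq : q = c * c + 1) :
    12 * residueMoment (a * q + c) (b * q)
      = q ^ 2 * (12 * residueMoment a b) + 3 * b ^ 3 * q ^ 2 * (q - 1) := by
  have hb' : (0 : ℤ) < b := by exact_mod_cast hb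
  have hq' : (0 : ℤ) < q := by rw [hq]; positivity
  have hcz : (c : ℤ) = b * m := by rw [hc]; push_cast; ring
  have hqz : (q : ℤ) = c * c + 1 := by rw [hq]; push_cast; ring
  have hmq : IsCoprime (m : ℤ) q := ⟨-(b * c), 1, by rw [hqz, hcz]; ring⟩
  have hsplit : residueMoment (a * q + c) (b * q)
      = q * ∑ k ∈ range (b * q), (k : ℤ) * (a * k % b)
        + b * ∑ k ∈ range (b * q), (k : ℤ) * (m * k % q)
        - b * q * ∑ k ∈ range (b * q), (k : ℤ) *
            (if (b : ℤ) * q ≤ q * (a * k % b) + b * (m * k % q) then 1 else 0) := by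
    simp only [residueMoment, Nat.cast_mul, hcz, add_mul_mul_emod_mul hb' hq', mul_sum,
      ← sum_add_distrib, ← sum_sub_distrib]
    exact sum_congr rfl fun k _ ↦ by ring
  have hu : 4 * ∑ k ∈ range (b * q), (k : ℤ) * (m * k % q)
      = q ^ 2 * (q - 1) * b * (b - 1) + 4 * b * residueMoment m q := by
    rw [mul_comm b q, four_mul_sum_range_mul_mul_emod hmq b]
  have hfloor : ∑ j ∈ range q, (j : ℤ) * (b * (m * j % q) / q)
      = ∑ j ∈ range q, (j : ℤ) * (c * j / q) - b * ∑ j ∈ range q, (j : ℤ) * (m * j / q) := by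
    simp only [mul_emod_ediv _ _ hq'.ne', hcz, mul_assoc, mul_sum, ← sum_sub_distrib]
    exact sum_congr rfl fun j _ ↦ by ring
  -- the sums `∑ j ⌊m j / q⌋` coming from `T(m, q)` and from the carries cancel
  linear_combination (norm := skip) 12 * hsplit + 3 * (q : ℤ) * four_mul_sum_range_mul_mul_emod h q
    + 3 * (b : ℤ) * hu + 2 * (b : ℤ) ^ 2 * six_mul_residueMoment m q
    - 3 * (b : ℤ) * q * four_mul_sum_range_mul_boole hb h hc hq - 12 * (b : ℤ) * q * hfloor
    - (b : ℤ) * q * twelve_mul_sum_range_mul_ediv hq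
  simp only [hqz, hcz]
  ring

theorem isCoprime_mul_add {a : ℤ} {b m c q : ℕ} (h : IsCoprime a b) (hc : c = b * m)
    (hq : q = c * c + 1) : IsCoprime (a * q + c) (b * q : ℕ) := by
  have hcz : (c : ℤ) = b * m := by rw [hc]; push_cast; ring
  have hqz : (q : ℤ) = c * c + 1 := by rw [hq]; push_cast; ring
  have hqb : IsCoprime (q : ℤ) b := ⟨1, -(b * m * m), by rw [hqz, hcz]; ring⟩
  have hcq : IsCoprime (c : ℤ) q := ⟨-c, 1, by rw [hqz]; ring⟩
  push_cast
  refine IsCoprime.mul_right ?_ ?_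
  · simpa only [hcz] using (h.mul_left hqb).add_mul_left_left m
  · simpa only [add_comm, mul_comm] using hcq.add_mul_left_left a

theorem normDedekindSum_mul_add {a : ℤ} {b m c q : ℕ} (hb : 0 < b) (h : IsCoprime a b)
    (hc : c = b * m) (hq : q = c * c + 1) :
    normDedekindSum (a * q + c) (b * q) = normDedekindSum a b := by
  have hq0 : 0 < q := by omega
  have hA := sq_mul_normDedekindSum (Nat.mul_pos hb hq0) (isCoprime_mul_add h hc hq)
  have ha := sq_mul_normDedekindSum hb h
  have hT : (12 * residueMoment (a * q + c) (b * q) : ℝ)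
      = q ^ 2 * (12 * residueMoment a b) + 3 * b ^ 3 * q ^ 2 * (q - 1) := by
    exact_mod_cast twelve_mul_residueMoment_mul_add hb h hc hq
  push_cast at hA
  refine mul_left_cancel₀ (pow_ne_zero 2 (by positivity : (b : ℝ) * q ≠ 0)) ?_
  linear_combination hA - (q : ℝ) ^ 2 * ha + hT

end DedekindSum

theorem value_attained_infinitely_often (r : ℚ) (a : ℤ) (b : ℕ)
    (h : Int.gcd a b = 1) (hr : normDedekindSum a b = (r : ℝ)) :
    ∃ (A : ℕ → ℤ) (B : ℕ → ℕ),
      (∀ i, Int.gcd (A i) (B i) = 1) ∧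
      Filter.Tendsto B Filter.atTop Filter.atTop ∧
      ∀ i, normDedekindSum (A i) (B i) = (r : ℝ) := by
  obtain ⟨a₀, b₀, hb₀, h₀, hr₀⟩ : ∃ (a₀ : ℤ) (b₀ : ℕ),
      0 < b₀ ∧ IsCoprime a₀ b₀ ∧ normDedekindSum a₀ b₀ = r := by
    rcases Nat.eq_zero_or_pos b with rfl | hb
    · have h11 : normDedekindSum 1 1 = 0 := by
        simpa [normDedekindSum, dedekindSum] using DedekindSum.saw_intCast 1
      refine ⟨1, 1, one_pos, isCoprime_one_left, ?_⟩
      rw [h11, ← hr, DedekindSum.normDedekindSum_zero_right]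
    · exact ⟨a, b, hb, Int.isCoprime_iff_gcd_eq_one.2 h, hr⟩
  let q (i : ℕ) : ℕ := b₀ * i * (b₀ * i) + 1
  refine ⟨fun i ↦ a₀ * q i + (b₀ * i : ℕ), fun i ↦ b₀ * q i, fun i ↦ ?_, ?_, fun i ↦ ?_⟩
  · exact Int.isCoprime_iff_gcd_eq_one.1 (DedekindSum.isCoprime_mul_add h₀ rfl rfl)
  · refine Filter.tendsto_atTop_mono (fun i ↦ ?_) Filter.tendsto_id
    calc i ≤ b₀ * i := Nat.le_mul_of_pos_left i hb₀
      _ ≤ q i := Nat.le_succ_of_le (Nat.le_mul_self _)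
      _ ≤ b₀ * q i := Nat.le_mul_of_pos_left _ hb₀
  · rw [DedekindSum.normDedekindSum_mul_add hb₀ h₀ rfl rfl, hr₀]
end
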